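/- The operator Ť does not map L^∞(−1,1) into L^∞(−1,1): the function f = χ_{[0,1)} satisfies f ∈ L^∞(−1,1) and f/w ∈ L¹(−1,1), but Ť(f) := −w·T(f/w) is not essentially bounded on (−1,1). -/

import Mathlib

open MeasureTheory Filter Set

/-- Lebesgue measure restricted to the interval `(-1, 1)`. -/
noncomputable def mIoo : MeasureTheory.Measure ℝ :=
  MeasureTheory.volume.restrict (Set.Ioo (-1 : ℝ) 1)

/-- The finite Hilbert transform: `T f t` is the principal value
`lim_{ε→0⁺} (1/π) (∫_{-1}^{t-ε} + ∫_{t+ε}^{1}) f x / (x - t) dx`. -/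
noncomputable def FHT (f : ℝ → ℂ) (t : ℝ) : ℂ :=
  limUnder (nhdsWithin (0 : ℝ) (Set.Ioi 0)) fun ε =>
    (Real.pi : ℂ)⁻¹ * ((∫ x in Set.Ioo (-1 : ℝ) (t - ε), f x / (↑x - ↑t)) +
      ∫ x in Set.Ioo (t + ε) (1 : ℝ), f x / (↑x - ↑t))

/-- `w x = √(1 - x²)`. -/
noncomputable def w (x : ℝ) : ℝ := Real.sqrt (1 - x ^ 2)

/-- The operator `Ť f = -w · T(f / w)`. -/
noncomputable def Tcheck (f : ℝ → ℂ) (t : ℝ) : ℂ :=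
  -((w t : ℂ) * FHT (fun y => f y / (w y : ℂ)) t)

/-- The operator `T̂ f = -(1/w) · T(w f)`. -/
noncomputable def That (f : ℝ → ℂ) (t : ℝ) : ℂ :=
  -(FHT (fun y => (w y : ℂ) * f y) t / (w t : ℂ))

/-- Membership in the Zygmund space `L_exp^α`: `f` is measurable and there is `λ > 0` with
`∫ exp(λ |f|^(1/α)) < ∞`. -/
def MemLexpPow (α : ℝ) (f : ℝ → ℂ) : Prop :=
  MeasureTheory.AEStronglyMeasurable f mIoo ∧
    ∃ l > (0 : ℝ),
      ∫⁻ x, ENNReal.ofReal (Real.exp (l * ‖f x‖ ^ ((1 : ℝ) / α))) ∂mIoo < ⊤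

/-- Membership in the Zygmund space `L_exp`: `f` is measurable and there is `λ > 0` with
`∫ exp(λ |f|) < ∞`. -/
def MemLexp (f : ℝ → ℂ) : Prop :=
  MeasureTheory.AEStronglyMeasurable f mIoo ∧
    ∃ l > (0 : ℝ), ∫⁻ x, ENNReal.ofReal (Real.exp (l * ‖f x‖)) ∂mIoo < ⊤

/-- Membership in the Zygmund space `L log L`: `g` is measurable and
`∫ |g| log(2 + |g|) < ∞`. -/
def MemLlogL (g : ℝ → ℂ) : Prop :=
  MeasureTheory.AEStronglyMeasurable g mIoo ∧
    MeasureTheory.Integrable (fun x => ‖g x‖ * Real.log (2 + ‖g x‖)) mIoo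

lemma w_continuous : Continuous w := by
  unfold w; exact (continuous_const.sub (continuous_pow 2)).sqrt

lemma w_nonneg (x : ℝ) : 0 ≤ w x := Real.sqrt_nonneg _

lemma w_pos {x : ℝ} (hx : x ∈ Ioo (-1:ℝ) 1) : 0 < w x :=
  Real.sqrt_pos.2 (by nlinarith [hx.1, hx.2])

lemma w_le_one (x : ℝ) : w x ≤ 1 := by
  unfold w
  calc Real.sqrt (1 - x ^ 2) ≤ Real.sqrt 1 := Real.sqrt_le_sqrt (by nlinarith)
    _ = 1 := Real.sqrt_one

lemma winv_integrableOn : IntegrableOn (fun x => (w x)⁻¹) (Ico (0:ℝ) 1) := by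
  have hbase : IntervalIntegrable (fun x : ℝ => x ^ (-(1/2) : ℝ)) volume 0 1 :=
    intervalIntegral.intervalIntegrable_rpow' (by norm_num)
  have h2 : IntervalIntegrable (fun x : ℝ => (1 - x) ^ (-(1/2) : ℝ)) volume 0 1 := by
    have := (hbase.comp_sub_left 1).symm
    norm_num at this
    exact this
  have h3 : IntegrableOn (fun x : ℝ => (1 - x) ^ (-(1/2) : ℝ)) (Ioo (0:ℝ) 1) :=
    (integrableOn_Ioc_iff_integrableOn_Ioo (by simp)).1 h2.1
  rw [integrableOn_Ico_iff_integrableOn_Ioo]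
  apply h3.mono' (w_continuous.measurable.inv.aestronglyMeasurable)
  rw [ae_restrict_iff' measurableSet_Ioo]
  refine ae_of_all _ fun x hx => ?_
  have hx0 : (0:ℝ) < x := hx.1
  have hx1 : x < 1 := hx.2
  have h1x : (0:ℝ) < 1 - x := by linarith
  have hsq : Real.sqrt (1 - x) ≤ w x := by
    unfold w; exact Real.sqrt_le_sqrt (by nlinarith)
  have hsqpos : 0 < Real.sqrt (1 - x) := Real.sqrt_pos.2 h1x
  have hrw : (1 - x) ^ (-(1/2) : ℝ) = (Real.sqrt (1 - x))⁻¹ := by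
    rw [Real.rpow_neg h1x.le, Real.sqrt_eq_rpow]
  rw [Real.norm_eq_abs, Pi.inv_apply, abs_of_nonneg (inv_nonneg.2 (w_nonneg x)), hrw]
  exact inv_anti₀ hsqpos hsq
lemma FHT_val {t : ℝ} (ht : t ∈ Ioo (-1:ℝ) 0) :
    FHT (fun y => (Ico (0:ℝ) 1).indicator (fun _ => (1:ℂ)) y / (w y : ℂ)) t
      = (Real.pi : ℂ)⁻¹ * ∫ x in Ico (0:ℝ) 1, (((w x)⁻¹ * (x - t)⁻¹ : ℝ) : ℂ) := by
  have hpt : ∀ x : ℝ, (Ico (0:ℝ) 1).indicator (fun _ => (1:ℂ)) x / (w x : ℂ) / ((x:ℂ) - (t:ℂ))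
      = (Ico (0:ℝ) 1).indicator (fun x => (((w x)⁻¹ * (x - t)⁻¹ : ℝ) : ℂ)) x := by
    intro x
    by_cases hx : x ∈ Ico (0:ℝ) 1
    · rw [indicator_of_mem hx, indicator_of_mem hx]
      push_cast
      rw [div_div, div_eq_mul_inv, one_mul, mul_inv]
    · rw [indicator_of_notMem hx, indicator_of_notMem hx]
      simp
  unfold FHT
  apply Filter.Tendsto.limUnder_eq
  apply Filter.Tendsto.congr' _ tendsto_const_nhds
  have hmem : Ioo (0:ℝ) (-t) ∈ nhdsWithin (0:ℝ) (Ioi 0) :=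
    Ioo_mem_nhdsGT_of_mem ⟨le_refl _, by linarith [ht.2]⟩
  filter_upwards [hmem] with ε hε
  have e1 : Ioo (-1:ℝ) (t - ε) ∩ Ico 0 1 = (∅ : Set ℝ) := by
    ext x
    simp only [mem_inter_iff, mem_Ioo, mem_Ico, mem_empty_iff_false, iff_false, not_and]
    rintro ⟨_, h2⟩ h3
    exfalso; linarith [hε.1, ht.2, h3]
  have e2 : Ioo (t + ε) (1:ℝ) ∩ Ico 0 1 = Ico (0:ℝ) 1 := by
    ext x
    simp only [mem_inter_iff, mem_Ioo, mem_Ico]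
    constructor
    · rintro ⟨_, h⟩; exact h
    · rintro ⟨h1, h2⟩
      exact ⟨⟨by linarith [hε.2], h2⟩, h1, h2⟩
  simp only [hpt]
  rw [setIntegral_indicator measurableSet_Ico, setIntegral_indicator measurableSet_Ico,
    e1, e2, setIntegral_empty, zero_add]
lemma J_integrable {t : ℝ} (ht : t ∈ Ioo (-1:ℝ) 0) :
    IntegrableOn (fun x => (w x)⁻¹ * (x - t)⁻¹) (Ico (0:ℝ) 1) := by
  apply Integrable.mono' (winv_integrableOn.const_mul (-t)⁻¹)
  · exact ((w_continuous.measurable.inv).mul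
      ((measurable_id.sub_const t).inv)).aestronglyMeasurable
  · rw [ae_restrict_iff' measurableSet_Ico]
    refine ae_of_all _ fun x hx => ?_
    have hxt : 0 < x - t := by linarith [hx.1, ht.2]
    have h1 : (x - t)⁻¹ ≤ (-t)⁻¹ := inv_anti₀ (by linarith [ht.2]) (by linarith [hx.1])
    rw [Real.norm_eq_abs,
      abs_of_nonneg (mul_nonneg (inv_nonneg.2 (w_nonneg x)) (inv_nonneg.2 hxt.le)),
      mul_comm ((-t)⁻¹)]
    exact mul_le_mul_of_nonneg_left h1 (inv_nonneg.2 (w_nonneg x))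

lemma norm_Tcheck {t : ℝ} (ht : t ∈ Ioo (-1:ℝ) 0) :
    ‖Tcheck ((Ico (0:ℝ) 1).indicator fun _ => (1:ℂ)) t‖
      = w t * (Real.pi⁻¹ * ∫ x in Ico (0:ℝ) 1, (w x)⁻¹ * (x - t)⁻¹) := by
  have hI : (0:ℝ) ≤ ∫ x in Ico (0:ℝ) 1, (w x)⁻¹ * (x - t)⁻¹ :=
    setIntegral_nonneg measurableSet_Ico fun x hx =>
      mul_nonneg (inv_nonneg.2 (w_nonneg x)) (inv_nonneg.2 (by linarith [hx.1, ht.2]))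
  have hcast : (∫ x in Ico (0:ℝ) 1, (((w x)⁻¹ * (x - t)⁻¹ : ℝ) : ℂ))
      = (((∫ x in Ico (0:ℝ) 1, (w x)⁻¹ * (x - t)⁻¹ : ℝ)) : ℂ) := integral_ofReal
  rw [Tcheck, FHT_val ht, hcast, norm_neg, norm_mul, norm_mul, norm_inv]
  simp only [Complex.norm_real, Real.norm_eq_abs]
  rw [abs_of_nonneg (w_nonneg t), abs_of_nonneg Real.pi_pos.le, abs_of_nonneg hI]

lemma I_lower {t : ℝ} (ht2 : -(1/2:ℝ) < t) (ht0 : t < 0) :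
    Real.log (1/2 - t) - Real.log (-t)
      ≤ ∫ x in Ico (0:ℝ) 1, (w x)⁻¹ * (x - t)⁻¹ := by
  have ht1 : t ∈ Ioo (-1:ℝ) 0 := ⟨by linarith, ht0⟩
  have hJ := J_integrable ht1
  have hsub2 : Ico (0:ℝ) (1/2) ⊆ Ico (0:ℝ) 1 := Ico_subset_Ico_right (by norm_num)
  have step1 : ∫ x in Ico (0:ℝ) (1/2), (w x)⁻¹ * (x - t)⁻¹
      ≤ ∫ x in Ico (0:ℝ) 1, (w x)⁻¹ * (x - t)⁻¹ := by
    apply setIntegral_mono_set hJ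
    · rw [EventuallyLE, ae_restrict_iff' measurableSet_Ico]
      exact ae_of_all _ fun x hx =>
        mul_nonneg (inv_nonneg.2 (w_nonneg x)) (inv_nonneg.2 (by linarith [hx.1]))
    · exact HasSubset.Subset.eventuallyLE hsub2
  have hcont : IntegrableOn (fun x => (x - t)⁻¹) (Ico (0:ℝ) (1/2)) := by
    apply (ContinuousOn.integrableOn_compact isCompact_Icc ?_).mono_set Ico_subset_Icc_self
    exact ((continuousOn_id.sub continuousOn_const).inv₀
      fun x hx => by have h1 := hx.1; simp only [Pi.sub_apply, id_eq]; intro h; nlinarith)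
  have step2 : ∫ x in Ico (0:ℝ) (1/2), (x - t)⁻¹
      ≤ ∫ x in Ico (0:ℝ) (1/2), (w x)⁻¹ * (x - t)⁻¹ := by
    apply setIntegral_mono_on hcont (hJ.mono_set hsub2) measurableSet_Ico
    intro x hx
    have hwx : 0 < w x := w_pos ⟨by linarith [hx.1], by linarith [hx.2]⟩
    have h1 : 1 ≤ (w x)⁻¹ := (one_le_inv₀ hwx).2 (w_le_one x)
    exact le_mul_of_one_le_left (inv_nonneg.2 (by linarith [hx.1])) h1
  have step3 : ∫ x in Ico (0:ℝ) (1/2), (x - t)⁻¹ = Real.log ((1/2 - t)/(0 - t)) := by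
    rw [integral_Ico_eq_integral_Ioo, ← integral_Ioc_eq_integral_Ioo,
      ← intervalIntegral.integral_of_le (by norm_num : (0:ℝ) ≤ 1/2),
      intervalIntegral.integral_comp_sub_right (fun u => u⁻¹) t,
      integral_inv_of_pos (by linarith) (by linarith)]
  have hlog : Real.log ((1/2 - t)/(0 - t)) = Real.log (1/2 - t) - Real.log (-t) := by
    rw [show (0:ℝ) - t = -t by ring, Real.log_div (by linarith) (by linarith)]
  linarith [step1, step2, step3.symm.trans_le step2, hlog ▸ step3 ▸ step2]

/-- `Ť` does not map `L^∞(-1,1)` into `L^∞(-1,1)`: for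
`f = χ_{[0,1)}` one has `f ∈ L^∞`, `f/w ∈ L¹`, but `Ť f` is not essentially
bounded. -/
theorem stmt14 :
    MeasureTheory.MemLp ((Set.Ico (0 : ℝ) 1).indicator fun _ => (1 : ℂ)) ⊤ mIoo ∧
    MeasureTheory.Integrable
      (fun x => (Set.Ico (0 : ℝ) 1).indicator (fun _ => (1 : ℂ)) x / (w x : ℂ)) mIoo ∧
    ¬ MeasureTheory.MemLp
        (Tcheck ((Set.Ico (0 : ℝ) 1).indicator fun _ => (1 : ℂ))) ⊤ mIoo := by
  refine ⟨?_, ?_, ?_⟩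
  · apply memLp_top_of_bound
      ((stronglyMeasurable_const.indicator measurableSet_Ico).aestronglyMeasurable) 1
    refine ae_of_all _ fun x => ?_
    by_cases hx : x ∈ Ico (0:ℝ) 1
    · rw [indicator_of_mem hx]; simp
    · rw [indicator_of_notMem hx]; simp
  · have heq : (fun x : ℝ => (Ico (0:ℝ) 1).indicator (fun _ => (1:ℂ)) x / (w x : ℂ))
        = (Ico (0:ℝ) 1).indicator (fun x => (((w x)⁻¹ : ℝ) : ℂ)) := by
      funext x
      by_cases hx : x ∈ Ico (0:ℝ) 1
      · rw [indicator_of_mem hx, indicator_of_mem hx]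
        push_cast
        rw [div_eq_mul_inv, one_mul]
      · rw [indicator_of_notMem hx, indicator_of_notMem hx, zero_div]
    rw [heq, mIoo]
    exact (IntegrableOn.integrable_indicator
      (winv_integrableOn.ofReal (𝕜 := ℂ)) measurableSet_Ico).restrict
  · intro hmem
    set F := Tcheck ((Set.Ico (0 : ℝ) 1).indicator fun _ => (1 : ℂ)) with hF
    have hess : eLpNormEssSup F mIoo < ⊤ := by
      have := hmem.2
      rwa [eLpNorm_exponent_top] at this
    set C := (eLpNormEssSup F mIoo).toReal with hCdef
    have hCnn : 0 ≤ C := ENNReal.toReal_nonneg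
    have hC : ∀ᵐ t ∂mIoo, ‖F t‖ ≤ C := by
      filter_upwards [ae_le_eLpNormEssSup (f := F) (μ := mIoo)] with t htle
      have h2 := ENNReal.toReal_mono hess.ne htle
      simpa using h2
    set δ := min (1/2 : ℝ) (Real.exp (-(2 * Real.pi * (C + 1) + Real.log 2))) with hδ
    have hδpos : 0 < δ := lt_min (by norm_num) (Real.exp_pos _)
    have hδhalf : δ ≤ 1/2 := min_le_left _ _
    have hδexp : δ ≤ Real.exp (-(2 * Real.pi * (C + 1) + Real.log 2)) := min_le_right _ _
    have hπ := Real.pi_pos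
    have hlow : ∀ t ∈ Ioo (-δ) (0:ℝ), C < ‖F t‖ := by
      intro t htm
      have ht0 : t < 0 := htm.2
      have hth : -(1/2:ℝ) < t := by linarith [htm.1]
      have ht1 : t ∈ Ioo (-1:ℝ) 0 := ⟨by linarith, ht0⟩
      rw [hF, norm_Tcheck ht1]
      have hwt : (1/2:ℝ) ≤ w t := by
        rw [show (1/2:ℝ) = Real.sqrt (1/4) by
          rw [show (1/4:ℝ) = (1/2)^2 by norm_num, Real.sqrt_sq (by norm_num)]]
        exact Real.sqrt_le_sqrt (by nlinarith)
      have hIl := I_lower hth ht0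
      have hlogt : Real.log (-t) < -(2 * Real.pi * (C + 1) + Real.log 2) := by
        have h1 : -t < Real.exp (-(2 * Real.pi * (C + 1) + Real.log 2)) :=
          lt_of_lt_of_le (by linarith [htm.1]) hδexp
        have := Real.log_lt_log (by linarith) h1
        rwa [Real.log_exp] at this
      have hlog2 : Real.log (1/2) ≤ Real.log (1/2 - t) :=
        Real.log_le_log (by norm_num) (by linarith)
      have hhalf : Real.log (1/2 : ℝ) = -Real.log 2 := by
        rw [one_div, Real.log_inv]
      have hL : 2 * Real.pi * (C + 1)
          < ∫ x in Ico (0:ℝ) 1, (w x)⁻¹ * (x - t)⁻¹ := by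
        nlinarith [hIl, hlogt, hlog2, hhalf]
      have hinv : 0 < Real.pi⁻¹ := inv_pos.2 hπ
      have h5 : 2 * (C + 1) < Real.pi⁻¹ * ∫ x in Ico (0:ℝ) 1, (w x)⁻¹ * (x - t)⁻¹ := by
        have := mul_lt_mul_of_pos_left hL hinv
        have heq2 : Real.pi⁻¹ * (2 * Real.pi * (C + 1)) = 2 * (C + 1) := by
          field_simp
        linarith [heq2 ▸ this]
      nlinarith [h5, hwt, hCnn]
    have h0 : mIoo {t | ¬ ‖F t‖ ≤ C} = 0 := ae_iff.mp hC
    have hsub : Ioo (-δ) (0:ℝ) ⊆ {t | ¬ ‖F t‖ ≤ C} :=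
      fun t ht => not_le.2 (hlow t ht)
    have hzero : mIoo (Ioo (-δ) 0) = 0 := measure_mono_null hsub h0
    rw [mIoo, Measure.restrict_apply measurableSet_Ioo] at hzero
    have hinter : Ioo (-δ) (0:ℝ) ∩ Ioo (-1:ℝ) 1 = Ioo (-δ) 0 := by
      apply inter_eq_self_of_subset_left
      intro x hx
      exact ⟨by linarith [hx.1, hδhalf], by linarith [hx.2]⟩
    rw [hinter, Real.volume_Ioo] at hzero
    have : (0:ℝ) - (-δ) ≤ 0 := by
      by_contra hpos
      exact (ENNReal.ofReal_pos.2 (by linarith)).ne' hzero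
    linarith
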